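/- arXiv:1805.09708 — 3 statements merged into one kernel-verified Lean document; each statement's English description precedes it below -/
import Mathlib

section
/- Let Y be a non-empty compact Hausdorff space. Then there exist a compact Hausdorff space Z and a dense subset D of Z such that the subspace topology on D is discrete and the remainder Z \ D (with its subspace topology) is homeomorphic to Y. (Equivalently: every non-empty compact Hausdorff space Y arises as the remainder of a Hausdorff compactification of some discrete space.) -/
universe u

/-! Let `D = Y × ℕ` with the discrete topology. Inside the compact space `Y × OnePoint D`, the
graph `{(y, (y, n))}` of the projection `D → Y` together with `Y × {∞}` is closed, hence a
Hausdorff compactification of `D`. Each `(y, ∞)` is a limit of the infinitely many graph points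
`(y, (y, n))`, so the graph is dense, and the remainder `Y × {∞}` is a copy of `Y`. -/

open Set Filter Topology

namespace OnePoint

variable {X K : Type*} [TopologicalSpace X] [TopologicalSpace K]

/-- The graph `{(f x, x)}` of `f` together with `K × {∞}`; it is the closure of the graph when
every neighbourhood in `K` has infinite preimage under `f`. -/
def graphCompactification (f : X → K) : Set (K × OnePoint X) :=
  {p | ∀ x : X, p.2 = x → p.1 = f x}

def graphPoints (f : X → K) : Set (graphCompactification f) :=
  {z | z.1.2 ≠ ∞}

variable [DiscreteTopology X]

theorem isOpen_singleton_coe (x : X) : IsOpen ({(x : OnePoint X)} : Set (OnePoint X)) := by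
  simpa using isOpen_image_coe.2 (isOpen_discrete {x})

theorem tendsto_coe_cofinite_infty : Tendsto ((↑) : X → OnePoint X) cofinite (𝓝 ∞) := by
  simpa [coclosedCompact_eq_cocompact, cocompact_eq_cofinite] using tendsto_coe_infty (X := X)

theorem isClosed_graphCompactification [T1Space K] (f : X → K) :
    IsClosed (graphCompactification f) := by
  simp only [graphCompactification, ofPred_forall]
  exact isClosed_iInter fun x => isClosed_imp ((isOpen_singleton_coe x).preimage continuous_snd)
    (isClosed_singleton.preimage continuous_fst)

instance [CompactSpace K] [T1Space K] (f : X → K) : CompactSpace (graphCompactification f) :=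
  isCompact_iff_compactSpace.1 (isClosed_graphCompactification f).isCompact

instance (f : X → K) : DiscreteTopology (graphPoints f) := by
  refine discreteTopology_iff_isOpen_singleton.2 fun ⟨⟨⟨k, p⟩, hz⟩, hp⟩ => ?_
  obtain ⟨x, rfl⟩ := ne_infty_iff_exists.1 hp
  convert ((isOpen_singleton_coe x).preimage continuous_snd).preimage
    (continuous_subtype_val.comp continuous_subtype_val)
  ext ⟨⟨⟨k', p'⟩, hz'⟩, hp'⟩
  simp only [mem_singleton_iff, mem_preimage, Function.comp_apply, Subtype.mk.injEq, Prod.mk.injEq]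
  constructor
  · rintro ⟨-, rfl⟩; rfl
  · rintro rfl; exact ⟨(hz' x rfl).trans (hz x rfl).symm, rfl⟩

theorem dense_graphPoints {f : X → K} (hf : ∀ k, ∀ U ∈ 𝓝 k, (f ⁻¹' U).Infinite) :
    Dense (graphPoints f) := by
  rintro ⟨⟨k, p⟩, hz⟩
  induction p using OnePoint.rec with
  | infty =>
    let g : X → graphCompactification f := fun x =>
      ⟨(f x, x), fun y hy => by rw [coe_eq_coe.1 hy]⟩
    have hl : (comap f (𝓝 k) ⊓ cofinite).NeBot :=
      inf_neBot_iff_frequently_left.2 fun {q} hq => by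
        obtain ⟨U, hU, hUq⟩ := mem_comap.1 hq
        exact ((hf k U hU).mono hUq).frequently_cofinite
    have hg : Tendsto g (comap f (𝓝 k) ⊓ cofinite) (𝓝 ⟨(k, ∞), hz⟩) := by
      refine tendsto_subtype_rng.2 (Tendsto.prodMk_nhds ?_ ?_)
      · exact tendsto_comap.mono_left inf_le_left
      · exact tendsto_coe_cofinite_infty.mono_left inf_le_right
    exact mem_closure_of_tendsto hg (Eventually.of_forall fun x => coe_ne_infty x)
  | coe x => exact subset_closure (coe_ne_infty x)

def graphPointsComplHomeomorph (f : X → K) :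
    ((graphPoints f)ᶜ : Set (graphCompactification f)) ≃ₜ K where
  toFun z := z.1.1.1
  invFun k := ⟨⟨(k, ∞), fun x hx => (infty_ne_coe x hx).elim⟩, fun h => h rfl⟩
  left_inv := fun ⟨⟨⟨k, p⟩, hz⟩, hp⟩ => by
    obtain rfl : p = ∞ := not_not.1 hp
    rfl
  right_inv _ := rfl
  continuous_toFun := by fun_prop
  continuous_invFun := by fun_prop

end OnePoint

theorem exists_compactification_of_discrete_with_remainder_general
    (Y : Type u) [TopologicalSpace Y] [CompactSpace Y] [T2Space Y] :
    ∃ (Z : Type u) (_ : TopologicalSpace Z) (D : Set Z),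
      CompactSpace Z ∧ T2Space Z ∧ Dense D ∧ DiscreteTopology D ∧
        Nonempty ((Dᶜ : Set Z) ≃ₜ Y) := by
  let f : WithDiscreteTopology (Y × ℕ) → Y := fun x => x.ofTopology.1
  have hf : ∀ k, ∀ U ∈ 𝓝 k, (f ⁻¹' U).Infinite := fun k U hU => by
    have hinj : (fun n : ℕ => WithTopology.toTopology ⊥ (k, n)).Injective := fun m n h => by
      simpa [WithTopology.toTopology_inj] using h
    exact (infinite_range_of_injective hinj).mono
      (range_subset_iff.2 fun _ => mem_of_mem_nhds (x := k) hU)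
  exact ⟨OnePoint.graphCompactification f, inferInstance, OnePoint.graphPoints f, inferInstance,
    inferInstance, OnePoint.dense_graphPoints hf, inferInstance,
    ⟨OnePoint.graphPointsComplHomeomorph f⟩⟩

/-- Let `Y` be a non-empty compact Hausdorff space.  Then there exist
a compact Hausdorff space `Z` and a dense subset `D` of `Z` such that the subspace
topology on `D` is discrete and the remainder `Z \ D` (with its subspace topology) is
homeomorphic to `Y`.  (Every non-empty compact Hausdorff space is the remainder of a
Hausdorff compactification of some discrete space.) -/
theorem exists_compactification_of_discrete_with_remainder
    (Y : Type u) [TopologicalSpace Y] [CompactSpace Y] [T2Space Y] [Nonempty Y] :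
    ∃ (Z : Type u) (_ : TopologicalSpace Z) (D : Set Z),
      CompactSpace Z ∧ T2Space Z ∧ Dense D ∧ DiscreteTopology D ∧
        Nonempty ((Dᶜ : Set Z) ≃ₜ Y) :=
  exists_compactification_of_discrete_with_remainder_general Y
end

section
/- Let ⟨γX, γ⟩ be a Hausdorff compactification of a non-empty topological space X such that the space γX is completely regular. Then γX is generated by the set F = C_γ(X): that is, F ∈ E(X), the space e_F X is compact, and the compactification ⟨e_F X, e_F⟩ is equivalent with ⟨γX, γ⟩. -/
/-!
Let `Φ : γX → ℝ^F` send a point `b` to the values at `b` of the continuous extensions of the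
members of `F`. It is continuous, and injective because `γX` is Tychonoff and every continuous
`g : γX → ℝ` is bounded (by compactness), so that `g ∘ γ ∈ F`. A continuous injection of a compact
space into a Hausdorff one is a closed embedding, and `Φ ∘ γ = e_F` together with the density of
`γ` identifies its image with `e_F X`.
-/

open Topology

/-- For `F ⊆ C*(X)`, the evaluation map `e_F : X → ℝ^F`, `e_F(x)(f) = f(x)`. -/
def evalMap {X : Type*} (F : Set (X → ℝ)) : X → (F → ℝ) :=
  fun x f => (f : X → ℝ) x

namespace Topology.IsDenseInducing

variable {X G : Type*} [TopologicalSpace X] [TopologicalSpace G] {γ : X → G}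
  (hγ : IsDenseInducing γ) {F : Set (X → ℝ)}

noncomputable def extendEval (F : Set (X → ℝ)) : G → (F → ℝ) :=
  fun b f => hγ.extend f b

include hγ

theorem extendEval_comp (hF : ∀ f ∈ F, Continuous f) : hγ.extendEval F ∘ γ = evalMap F :=
  funext fun x => funext fun f => hγ.extend_eq (hF f f.2) x

theorem continuous_extendEval (hF : ∀ f ∈ F, ∃ g : G → ℝ, Continuous g ∧ g ∘ γ = f) :
    Continuous (hγ.extendEval F) := by
  refine continuous_pi fun f => ?_
  obtain ⟨g, hg, hgf⟩ := hF f f.2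
  rw [show (fun b => hγ.extendEval F b f) = g from
    hγ.extend_unique (fun x => congrFun hgf x) hg]
  exact hg

theorem injective_extendEval [T35Space G] (hF : ∀ g : G → ℝ, Continuous g → g ∘ γ ∈ F) :
    Function.Injective (hγ.extendEval F) := by
  intro a b hab
  by_contra hne
  obtain ⟨g, hg, hgab⟩ := separatesPoints_continuous_of_t35Space hne
  have hextend : hγ.extend (g ∘ γ) = g := hγ.extend_unique (fun _ => rfl) hg
  have := congrFun hab ⟨g ∘ γ, hF g hg⟩
  simp only [extendEval, hextend] at this
  exact hgab this

theorem range_extendEval (hF : ∀ f ∈ F, Continuous f)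
    (hΦ : IsClosedEmbedding (hγ.extendEval F)) :
    Set.range (hγ.extendEval F) = closure (Set.range (evalMap F)) := by
  rw [← hγ.extendEval_comp hF, Set.range_comp, hΦ.closure_image_eq,
    hγ.dense.closure_range, Set.image_univ]

end Topology.IsDenseInducing

theorem completelyRegular_compactification_generated_by_Cgamma_general
    {X : Type*} [TopologicalSpace X]
    {G : Type*} [TopologicalSpace G] [CompactSpace G] [T2Space G]
    [CompletelyRegularSpace G]
    (γ : X → G) (hemb : IsEmbedding γ) (hdense : DenseRange γ)
    (F : Set (X → ℝ))
    (hF : F = {f : X → ℝ | Continuous f ∧ (∃ M : ℝ, ∀ x, |f x| ≤ M) ∧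
      ∃ g : G → ℝ, Continuous g ∧ g ∘ γ = f}) :
    (∀ f ∈ F, Continuous f ∧ ∃ M : ℝ, ∀ x, |f x| ≤ M) ∧
    IsEmbedding (evalMap F) ∧
    IsCompact (closure (Set.range (evalMap F))) ∧
    ∃ h : G ≃ₜ (closure (Set.range (evalMap F)) : Set (F → ℝ)),
      ∀ x : X, (h (γ x) : F → ℝ) = evalMap F x := by
  have : T35Space G := {}
  have hγ : IsDenseInducing γ := ⟨hemb.isInducing, hdense⟩
  have hbdd : ∀ f ∈ F, Continuous f ∧ ∃ M : ℝ, ∀ x, |f x| ≤ M := fun f hf => by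
    rw [hF] at hf; exact ⟨hf.1, hf.2.1⟩
  have hext : ∀ f ∈ F, ∃ g : G → ℝ, Continuous g ∧ g ∘ γ = f := fun f hf => by
    rw [hF] at hf; exact hf.2.2
  have hsep : ∀ g : G → ℝ, Continuous g → g ∘ γ ∈ F := fun g hg => by
    obtain ⟨M, hM⟩ := isCompact_univ.exists_bound_of_continuousOn hg.continuousOn
    rw [hF]
    exact ⟨hg.comp hemb.continuous, ⟨M, fun x => hM (γ x) trivial⟩, g, hg, rfl⟩
  have hFcont := fun f hf => (hbdd f hf).1
  have hΦ : IsClosedEmbedding (hγ.extendEval F) :=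
    (hγ.continuous_extendEval hext).isClosedEmbedding (hγ.injective_extendEval hsep)
  have hrange := hγ.range_extendEval hFcont hΦ
  refine ⟨hbdd, ?_, hrange ▸ isCompact_range hΦ.continuous, ?_⟩
  · exact hγ.extendEval_comp hFcont ▸ hΦ.isEmbedding.comp hemb
  · exact ⟨hΦ.isEmbedding.toHomeomorph.trans (Homeomorph.setCongr hrange),
      fun x => congrFun (hγ.extendEval_comp hFcont) x⟩

/-- Let `⟨γX, γ⟩` be a Hausdorff compactification of a non-empty
topological space `X` such that the space `γX` is completely regular.  Then `γX` is
generated by the set `F = C_γ(X)` of bounded continuous real functions on `X` that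
extend continuously over `γX`: namely `F ∈ E(X)` (all members of `F` are bounded and
continuous and the evaluation map `e_F` is an embedding), the space
`e_F X = cl(e_F(X))` is compact, and the compactification `⟨e_F X, e_F⟩` is
equivalent with `⟨γX, γ⟩`. -/
theorem completelyRegular_compactification_generated_by_Cgamma
    {X : Type*} [TopologicalSpace X] [Nonempty X]
    {G : Type*} [TopologicalSpace G] [CompactSpace G] [T2Space G]
    [CompletelyRegularSpace G]
    (γ : X → G) (hemb : IsEmbedding γ) (hdense : DenseRange γ)
    (F : Set (X → ℝ))
    (hF : F = {f : X → ℝ | Continuous f ∧ (∃ M : ℝ, ∀ x, |f x| ≤ M) ∧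
      ∃ g : G → ℝ, Continuous g ∧ g ∘ γ = f}) :
    (∀ f ∈ F, Continuous f ∧ ∃ M : ℝ, ∀ x, |f x| ≤ M) ∧
    IsEmbedding (evalMap F) ∧
    IsCompact (closure (Set.range (evalMap F))) ∧
    ∃ h : G ≃ₜ (closure (Set.range (evalMap F)) : Set (F → ℝ)),
      ∀ x : X, (h (γ x) : F → ℝ) = evalMap F x :=
  completelyRegular_compactification_generated_by_Cgamma_general γ hemb hdense F hF
end

section
/- Let X and Y be non-empty topological spaces such that X is compact and Y is pseudocompact. Then the product space X × Y is pseudocompact. -/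
theorem ContinuousMap.exists_bound_norm_of_compactSpace_left {X Y E : Type*}
    [TopologicalSpace X] [TopologicalSpace Y] [CompactSpace X] [SeminormedAddCommGroup E]
    (f : C(X × Y, E)) : ∃ g : C(Y, ℝ), ∀ p, ‖f p‖ ≤ g p.2 := by
  -- `y ↦ ‖f (·, y)‖` is the sup norm of the curried map, continuous since `X` is compact.
  let F : C(Y, C(X, E)) := (f.comp .prodSwap).curry
  refine ⟨⟨fun y => ‖F y‖, continuous_norm.comp F.continuous⟩, fun p => ?_⟩
  exact (F p.2).norm_coe_le_norm p.1

theorem pseudocompact_prod_of_compact_pseudocompact_general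
    {X Y : Type*} [TopologicalSpace X] [TopologicalSpace Y]
    [CompactSpace X]
    (hY : ∀ f : Y → ℝ, Continuous f → ∃ M : ℝ, ∀ y, |f y| ≤ M) :
    ∀ f : X × Y → ℝ, Continuous f → ∃ M : ℝ, ∀ p, |f p| ≤ M := by
  intro f hf
  obtain ⟨g, hg⟩ := ContinuousMap.exists_bound_norm_of_compactSpace_left ⟨f, hf⟩
  obtain ⟨M, hM⟩ := hY g g.continuous
  exact ⟨M, fun p => (hg p).trans ((le_abs_self _).trans (hM p.2))⟩

/-- Let `X` and `Y` be non-empty topological spaces such that `X`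
is compact and `Y` is pseudocompact (every continuous real-valued function on `Y` is
bounded).  Then the product space `X × Y` is pseudocompact. -/
theorem pseudocompact_prod_of_compact_pseudocompact
    {X Y : Type*} [TopologicalSpace X] [TopologicalSpace Y]
    [Nonempty X] [Nonempty Y] [CompactSpace X]
    (hY : ∀ f : Y → ℝ, Continuous f → ∃ M : ℝ, ∀ y, |f y| ≤ M) :
    ∀ f : X × Y → ℝ, Continuous f → ∃ M : ℝ, ∀ p, |f p| ≤ M :=
  pseudocompact_prod_of_compact_pseudocompact_general hY
end
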